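/- The TM equation of state satisfies the admissibility conditions: the function h(p,ρ) = 5p/(2ρ) + √(1 + (9/4)(p/ρ)²) on (0,∞)×(0,∞) satisfies, for all p, ρ > 0: (heq1) h(p,ρ) ≥ √(1 + p²/ρ²) + p/ρ, and (heq2) h(p,ρ)·(1/ρ − ∂h/∂p(p,ρ)) < ∂h/∂ρ(p,ρ) < 0. -/

import Mathlib

/-!
The TM enthalpy depends on `(p, ρ)` only through the temperature `θ = p / ρ`:
`hTM p ρ = g θ` with `g θ = 5θ/2 + s`, `s = √(1 + 9θ²/4)`. For any such `h = g (p / ρ)` one has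
`∂h/∂p = g' / ρ` and `∂h/∂ρ = -θ g' / ρ`, so (heq2) reduces to the one-variable conditions
`0 < g'` and `g < (g - θ) g'`. For the TM profile `(g - θ) g' - g = 7θ/2 + 3s/2 + 27θ²/(8s) > 0`.
Condition (heq1) follows from `√(1 + θ²) ≤ s` and `θ ≤ 5θ/2`.
-/

noncomputable section

/-- The TM EOS `h(p,ρ) = 5p/(2ρ) + √(1 + (9/4)(p/ρ)²)`. -/
def hTM (p ρ : ℝ) : ℝ := 5 * p / (2 * ρ) + Real.sqrt (1 + (9 / 4) * (p / ρ) ^ 2)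

def tmEnthalpy (θ : ℝ) : ℝ := 5 * θ / 2 + √(1 + 9 / 4 * θ ^ 2)

lemma hasDerivAt_tmEnthalpy (θ : ℝ) :
    HasDerivAt tmEnthalpy (5 / 2 + 9 * θ / (4 * √(1 + 9 / 4 * θ ^ 2))) θ := by
  have hpos : 0 < 1 + 9 / 4 * θ ^ 2 := by positivity
  have hsq : HasDerivAt (fun θ => 1 + 9 / 4 * θ ^ 2) (9 / 4 * (2 * θ)) θ := by
    simpa using (((hasDerivAt_id θ).pow 2).const_mul (9 / 4)).const_add 1
  refine ((((hasDerivAt_id θ).const_mul 5).div_const 2).add (hsq.sqrt hpos.ne')).congr_deriv ?_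
  field_simp

lemma tmEnthalpy_lt_sub_mul_deriv {θ : ℝ} (hθ : 0 ≤ θ) :
    tmEnthalpy θ < (tmEnthalpy θ - θ) * (5 / 2 + 9 * θ / (4 * √(1 + 9 / 4 * θ ^ 2))) := by
  set s := √(1 + 9 / 4 * θ ^ 2) with hs
  have hs_pos : 0 < s := Real.sqrt_pos.mpr (by positivity)
  have key : (tmEnthalpy θ - θ) * (5 / 2 + 9 * θ / (4 * s)) - tmEnthalpy θ
      = 7 / 2 * θ + 3 / 2 * s + 27 / 8 * θ ^ 2 / s := by
    rw [tmEnthalpy, ← hs]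
    field_simp
    ring
  have : 0 < 7 / 2 * θ + 3 / 2 * s + 27 / 8 * θ ^ 2 / s := by positivity
  linarith

lemma sqrt_one_add_sq_add_le_tmEnthalpy {θ : ℝ} (hθ : 0 ≤ θ) :
    √(1 + θ ^ 2) + θ ≤ tmEnthalpy θ := by
  have : √(1 + θ ^ 2) ≤ √(1 + 9 / 4 * θ ^ 2) := Real.sqrt_le_sqrt (by nlinarith [sq_nonneg θ])
  unfold tmEnthalpy
  linarith

def SatisfiesHeq2 (h : ℝ → ℝ → ℝ) (p ρ : ℝ) : Prop :=
  h p ρ * (1 / ρ - deriv (fun p' => h p' ρ) p) < deriv (fun ρ' => h p ρ') ρ ∧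
    deriv (fun ρ' => h p ρ') ρ < 0

section Ratio

variable {g : ℝ → ℝ} {g' p ρ : ℝ}

lemma HasDerivAt.comp_div_const (hg : HasDerivAt g g' (p / ρ)) :
    HasDerivAt (fun p' => g (p' / ρ)) (g' / ρ) p :=
  (hg.comp p ((hasDerivAt_id p).div_const ρ)).congr_deriv (by simp [div_eq_mul_inv])

lemma HasDerivAt.comp_const_div (hg : HasDerivAt g g' (p / ρ)) (hρ : ρ ≠ 0) :
    HasDerivAt (fun ρ' => g (p / ρ')) (-(p / ρ) * g' / ρ) ρ := by
  refine (hg.comp ρ ((hasDerivAt_inv hρ).const_mul p)).congr_deriv ?_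
  field_simp

lemma satisfiesHeq2_comp_div (hp : 0 < p) (hρ : 0 < ρ) (hg : HasDerivAt g g' (p / ρ))
    (hg'_pos : 0 < g') (hlt : g (p / ρ) < (g (p / ρ) - p / ρ) * g') :
    SatisfiesHeq2 (fun p ρ => g (p / ρ)) p ρ := by
  unfold SatisfiesHeq2
  rw [hg.comp_div_const.deriv, (hg.comp_const_div hρ.ne').deriv]
  constructor
  · have key : g (p / ρ) * (1 / ρ - g' / ρ) - -(p / ρ) * g' / ρ
        = (g (p / ρ) - (g (p / ρ) - p / ρ) * g') / ρ := by
      field_simp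
      ring
    have : (g (p / ρ) - (g (p / ρ) - p / ρ) * g') / ρ < 0 :=
      div_neg_of_neg_of_pos (by linarith) hρ
    linarith
  · rw [neg_mul, neg_div, neg_lt_zero]
    positivity

end Ratio

/-- The TM EOS satisfies (heq1) and (heq2). -/
theorem tmEOS_admissible (p ρ : ℝ) (hp : 0 < p) (hρ : 0 < ρ) :
    Real.sqrt (1 + p ^ 2 / ρ ^ 2) + p / ρ ≤ hTM p ρ ∧
    hTM p ρ * (1 / ρ - deriv (fun p' => hTM p' ρ) p) < deriv (fun ρ' => hTM p ρ') ρ ∧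
    deriv (fun ρ' => hTM p ρ') ρ < 0 := by
  have hθ : 0 ≤ p / ρ := by positivity
  have hTM_eq : hTM = fun p ρ => tmEnthalpy (p / ρ) := by
    funext p ρ
    unfold hTM tmEnthalpy
    ring
  refine ⟨?_, hTM_eq ▸ satisfiesHeq2_comp_div hp hρ (hasDerivAt_tmEnthalpy _)
    (by positivity) (tmEnthalpy_lt_sub_mul_deriv hθ)⟩
  rw [← div_pow, hTM_eq]
  exact sqrt_one_add_sq_add_le_tmEnthalpy hθ
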